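/- arXiv:1311.5039 — 6 statements merged into one kernel-verified Lean document; each statement's English description precedes it below -/
import Mathlib

section
/- For a down-set Δ ⊆ 2^[n] with blockers 𝓜, the generating function H_Δ(x,y) = ∑_{σ ∈ Δ} x^{|σ|} y^{n−|σ|} satisfies H_Δ(x,y) = ∑_{T ⊆ 𝓜} (−1)^{|T|} (x+y)^{n−|⋃T|} x^{|⋃T|}, as an identity of polynomials in two variables. -/
open Finset

theorem stmt_3 (n : ℕ) (Δ : Finset (Finset (Fin n)))
    (hΔ : ∀ σ ∈ Δ, ∀ τ ⊆ σ, τ ∈ Δ)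
    (𝓜 : Finset (Finset (Fin n)))
    (h𝓜 : ∀ M, M ∈ 𝓜 ↔ M ∉ Δ ∧ ∀ τ ⊂ M, τ ∈ Δ)
    (x y : ℝ) :
    ∑ σ ∈ Δ, x ^ σ.card * y ^ (n - σ.card) =
      ∑ T ∈ 𝓜.powerset,
        (-1 : ℝ) ^ T.card * (x + y) ^ (n - (T.sup id).card) *
          x ^ (T.sup id).card := by
  classical
  -- every set not in Δ contains a blocker
  have blocker : ∀ k (σ : Finset (Fin n)), σ.card = k → σ ∉ Δ → ∃ M ∈ 𝓜, M ⊆ σ := by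
    intro k
    induction k using Nat.strong_induction_on with
    | _ k ih =>
      intro σ hk hσ
      by_cases hmin : ∀ τ ⊂ σ, τ ∈ Δ
      · exact ⟨σ, (h𝓜 σ).2 ⟨hσ, hmin⟩, subset_rfl⟩
      · push_neg at hmin
        obtain ⟨τ, hτσ, hτ⟩ := hmin
        obtain ⟨M, hM, hMτ⟩ := ih τ.card (hk ▸ card_lt_card hτσ) τ rfl hτ
        exact ⟨M, hM, hMτ.trans hτσ.subset⟩
  have key : ∀ σ : Finset (Fin n), σ ∈ Δ ↔ ∀ M ∈ 𝓜, ¬ M ⊆ σ := by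
    intro σ
    constructor
    · intro hσ M hM hMσ
      exact ((h𝓜 M).1 hM).1 (hΔ σ hσ M hMσ)
    · intro h
      by_contra hσ
      obtain ⟨M, hM, hMσ⟩ := blocker σ.card σ rfl hσ
      exact h M hM hMσ
  -- expansion lemma
  have expand : ∀ S : Finset (Fin n),
      (x + y) ^ (n - S.card) * x ^ S.card
        = ∑ σ ∈ univ.powerset.filter (fun σ => S ⊆ σ), x ^ σ.card * y ^ (n - σ.card) := by
    intro S
    have hcompl : Sᶜ.card = n - S.card := by
      simp [card_compl]
    rw [← hcompl]
    have hprod : (x + y) ^ Sᶜ.card = ∑ A ∈ Sᶜ.powerset, x ^ A.card * y ^ (Sᶜ \ A).card := by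
      rw [← prod_const (b := x + y)]
      rw [Finset.prod_add]
      exact Finset.sum_congr rfl (fun A hA => by rw [prod_const, prod_const])
    rw [hprod, Finset.sum_mul]
    refine Finset.sum_nbij' (fun A => A ∪ S) (fun σ => σ \ S) ?_ ?_ ?_ ?_ ?_
    · intro A hA
      simp only [mem_powerset, mem_filter, mem_powerset] at hA ⊢
      exact ⟨subset_univ _, subset_union_right⟩
    · intro σ hσ
      simp only [mem_filter, mem_powerset] at hσ ⊢
      exact fun a ha => mem_compl.2 (mem_sdiff.1 ha).2
    · intro A hA
      simp only [mem_powerset] at hA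
      show (A ∪ S) \ S = A
      rw [union_sdiff_right]
      exact sdiff_eq_self_of_disjoint (disjoint_left.2 fun a haA haS =>
        (mem_compl.1 (hA haA)) haS)
    · intro σ hσ
      simp only [mem_filter, mem_powerset] at hσ
      show σ \ S ∪ S = σ
      exact sdiff_union_of_subset hσ.2
    · intro A hA
      simp only [mem_powerset] at hA
      have hdisj : Disjoint A S := disjoint_left.2 fun a haA haS => by
        have := hA haA; simp at this; exact this haS
      have hcard : (A ∪ S).card = A.card + S.card := card_union_of_disjoint hdisj
      have hAle : A.card ≤ n - S.card := hcompl ▸ card_le_card hA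
      have hSle : S.card ≤ n := by simpa using card_le_card (subset_univ S)
      have hsd : (Sᶜ \ A).card = n - (A.card + S.card) := by
        rw [card_sdiff_of_subset hA, hcompl]; omega
      show x ^ A.card * y ^ (Sᶜ \ A).card * x ^ S.card
          = x ^ (A ∪ S).card * y ^ (n - (A ∪ S).card)
      rw [hcard, hsd, mul_right_comm, ← pow_add]
  -- rewrite RHS
  symm
  calc ∑ T ∈ 𝓜.powerset,
        (-1 : ℝ) ^ T.card * (x + y) ^ (n - (T.sup id).card) * x ^ (T.sup id).card
      = ∑ T ∈ 𝓜.powerset, ∑ σ ∈ univ.powerset,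
          (if T.sup id ⊆ σ then (-1 : ℝ) ^ T.card * (x ^ σ.card * y ^ (n - σ.card)) else 0) := by
        refine Finset.sum_congr rfl (fun T hT => ?_)
        rw [mul_assoc, expand (T.sup id), Finset.mul_sum, ← Finset.sum_filter]
    _ = ∑ σ ∈ univ.powerset, (x ^ σ.card * y ^ (n - σ.card)) *
          ∑ T ∈ 𝓜.powerset, (if T.sup id ⊆ σ then (-1 : ℝ) ^ T.card else 0) := by
        rw [Finset.sum_comm]
        refine Finset.sum_congr rfl (fun σ hσ => ?_)
        rw [Finset.mul_sum]
        refine Finset.sum_congr rfl (fun T hT => ?_)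
        split <;> ring
    _ = ∑ σ ∈ univ.powerset, (x ^ σ.card * y ^ (n - σ.card)) *
          (if σ ∈ Δ then 1 else 0) := by
        refine Finset.sum_congr rfl (fun σ hσ => ?_)
        congr 1
        have hsub : ∀ T ∈ 𝓜.powerset, (T.sup id ⊆ σ ↔ T ⊆ 𝓜.filter (· ⊆ σ)) := by
          intro T hT
          simp only [mem_powerset] at hT
          constructor
          · intro h a ha
            exact mem_filter.2 ⟨hT ha, le_trans (Finset.le_sup (f := id) ha) h⟩
          · intro h
            exact Finset.sup_le fun a ha => (mem_filter.1 (h ha)).2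
        have : ∑ T ∈ 𝓜.powerset, (if T.sup id ⊆ σ then (-1 : ℝ) ^ T.card else 0)
            = ∑ T ∈ (𝓜.filter (· ⊆ σ)).powerset, (-1 : ℝ) ^ T.card := by
          rw [← Finset.sum_filter]
          apply Finset.sum_congr
          · ext T
            simp only [mem_filter, mem_powerset]
            constructor
            · rintro ⟨hT, h2⟩
              exact (hsub T (mem_powerset.2 hT)).1 h2
            · intro h
              have hT : T ⊆ 𝓜 := h.trans (filter_subset _ _)
              exact ⟨hT, (hsub T (mem_powerset.2 hT)).2 h⟩
          · intro T hT; rfl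
        rw [this]
        have hzero : ∑ T ∈ (𝓜.filter (· ⊆ σ)).powerset, (-1 : ℝ) ^ T.card
            = (0 : ℝ) ^ (𝓜.filter (· ⊆ σ)).card := by
          have := Finset.prod_add (fun _ => (-1 : ℝ)) (fun _ => (1 : ℝ)) (𝓜.filter (· ⊆ σ))
          simp only [prod_const, mul_one] at this
          rw [show (0:ℝ) = (-1) + 1 by ring, this]
          exact Finset.sum_congr rfl (fun T hT => by rw [one_pow, mul_one])
        rw [hzero]
        by_cases hσΔ : σ ∈ Δ
        · have : 𝓜.filter (· ⊆ σ) = ∅ := by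
            rw [filter_eq_empty_iff]
            exact fun M hM => (key σ).1 hσΔ M hM
          simp [this, hσΔ]
        · have : (𝓜.filter (· ⊆ σ)).Nonempty := by
            obtain ⟨M, hM, hMσ⟩ := blocker σ.card σ rfl hσΔ
            exact ⟨M, mem_filter.2 ⟨hM, hMσ⟩⟩
          rw [zero_pow (by exact_mod_cast Finset.card_ne_zero.2 this)]
          simp [hσΔ]
    _ = ∑ σ ∈ Δ, x ^ σ.card * y ^ (n - σ.card) := by
        simp only [mul_ite, mul_one, mul_zero]
        rw [← Finset.sum_filter]
        apply Finset.sum_congr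
        · ext σ
          simp only [mem_filter, mem_powerset]
          exact ⟨fun h => h.2, fun h => ⟨subset_univ σ, h⟩⟩
        · intro σ hσ; rfl
end

section
/- For a down-set Δ ⊆ 2^[n] with blockers 𝓜, the K-polynomial K_Δ(t) = ∑_{σ ∈ Δ} t^{|σ|} (1−t)^{n−|σ|} satisfies K_Δ(t) = ∑_{T ⊆ 𝓜} (−1)^{|T|} t^{|⋃T|}, as an identity of polynomials in t. -/
open Finset

lemma sum_wt_one {n : ℕ} (t : ℝ) (A : Finset (Fin n)) :
    ∑ ρ ∈ A.powerset, t ^ ρ.card * (1 - t) ^ (A.card - ρ.card) = 1 := by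
  have h := Finset.prod_add (fun _ : Fin n => t) (fun _ : Fin n => 1 - t) A
  simp only [Finset.prod_const] at h
  have h2 : ∀ ρ ∈ A.powerset, t ^ ρ.card * (1 - t) ^ (A \ ρ).card
      = t ^ ρ.card * (1 - t) ^ (A.card - ρ.card) := by
    intro ρ hρ
    rw [card_sdiff_of_subset (mem_powerset.mp hρ)]
  rw [Finset.sum_congr rfl h2] at h
  rw [← h]
  simp

lemma sum_supset {n : ℕ} (t : ℝ) (S : Finset (Fin n)) :
    ∑ σ ∈ (univ : Finset (Fin n)).powerset.filter (fun σ => S ⊆ σ),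
      t ^ σ.card * (1 - t) ^ (n - σ.card) = t ^ S.card := by
  have key : ∑ σ ∈ (univ : Finset (Fin n)).powerset.filter (fun σ => S ⊆ σ),
      t ^ σ.card * (1 - t) ^ (n - σ.card)
      = ∑ ρ ∈ ((univ : Finset (Fin n)) \ S).powerset,
        t ^ S.card * (t ^ ρ.card * (1 - t) ^ (((univ : Finset (Fin n)) \ S).card - ρ.card)) := by
    refine Finset.sum_nbij' (fun σ => σ \ S) (fun ρ => S ∪ ρ) ?_ ?_ ?_ ?_ ?_
    · intro σ hσ
      simp only [mem_filter, mem_powerset] at hσ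
      exact mem_powerset.mpr (sdiff_subset_sdiff hσ.1 (Finset.Subset.refl S))
    · intro ρ hρ
      simp only [mem_filter, mem_powerset]
      exact ⟨subset_univ _, subset_union_left⟩
    · intro σ hσ
      simp only [mem_filter, mem_powerset] at hσ
      exact union_sdiff_of_subset hσ.2
    · intro ρ hρ
      simp only [mem_powerset] at hρ
      have hd : Disjoint S ρ := (sdiff_disjoint.mono_left hρ).symm
      show (S ∪ ρ) \ S = ρ
      rw [union_sdiff_cancel_left hd]
    · intro σ hσ
      simp only [mem_filter, mem_powerset] at hσ
      have hc : (σ \ S).card = σ.card - S.card := card_sdiff_of_subset hσ.2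
      have hS : S.card ≤ σ.card := card_le_card hσ.2
      have hcard' : σ.card = S.card + (σ \ S).card := by rw [hc]; omega
      have hu : ((univ : Finset (Fin n)) \ S).card = n - S.card := by
        rw [card_sdiff_of_subset (subset_univ S), card_univ, Fintype.card_fin]
      have hσn : σ.card ≤ n := by
        have := card_le_card (subset_univ σ)
        simpa [card_univ] using this
      rw [hu, hc]
      have he : n - S.card - (σ.card - S.card) = n - σ.card := by omega
      have h3 : S.card + (σ.card - S.card) = σ.card := by omega
      rw [he, ← mul_assoc, ← pow_add, h3]
  rw [key, ← Finset.mul_sum, sum_wt_one, mul_one]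

theorem stmt_4 (n : ℕ) (Δ : Finset (Finset (Fin n)))
    (hΔ : ∀ σ ∈ Δ, ∀ τ ⊆ σ, τ ∈ Δ)
    (𝓜 : Finset (Finset (Fin n)))
    (h𝓜 : ∀ M, M ∈ 𝓜 ↔ M ∉ Δ ∧ ∀ τ ⊂ M, τ ∈ Δ)
    (t : ℝ) :
    ∑ σ ∈ Δ, t ^ σ.card * (1 - t) ^ (n - σ.card) =
      ∑ T ∈ 𝓜.powerset, (-1 : ℝ) ^ T.card * t ^ (T.sup id).card := by
  -- characterization of membership in Δ
  have hmem : ∀ σ : Finset (Fin n), σ ∈ Δ ↔ ∀ M ∈ 𝓜, ¬ M ⊆ σ := by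
    intro σ
    constructor
    · intro hσ M hM hMσ
      exact ((h𝓜 M).mp hM).1 (hΔ σ hσ M hMσ)
    · intro h
      by_contra hσ
      obtain ⟨τ, hτ, hmin⟩ := Finset.exists_min_image
        (σ.powerset.filter (fun ρ => ρ ∉ Δ)) Finset.card
        ⟨σ, by simp [hσ]⟩
      simp only [mem_filter, mem_powerset] at hτ
      have hτ𝓜 : τ ∈ 𝓜 := by
        rw [h𝓜]
        refine ⟨hτ.2, ?_⟩
        intro ρ hρ
        by_contra hρΔ
        have hρm : ρ ∈ σ.powerset.filter (fun ρ => ρ ∉ Δ) := by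
          simp only [mem_filter, mem_powerset]
          exact ⟨hρ.subset.trans hτ.1, hρΔ⟩
        have h1 := hmin ρ hρm
        have h2 := card_lt_card hρ
        omega
      exact h τ hτ𝓜 hτ.1
  set wt : Finset (Fin n) → ℝ := fun σ => t ^ σ.card * (1 - t) ^ (n - σ.card) with hwt
  have hfil : (univ : Finset (Fin n)).powerset.filter (fun σ => σ ∈ Δ) = Δ := by
    ext σ; simp
  have step1 : ∑ σ ∈ Δ, wt σ
      = ∑ σ ∈ (univ : Finset (Fin n)).powerset, (if σ ∈ Δ then (1:ℝ) else 0) * wt σ := by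
    rw [← hfil, Finset.sum_filter]
    exact Finset.sum_congr rfl (fun σ _ => by by_cases h : σ ∈ Δ <;> simp [h])
  -- indicator expansion
  have ind : ∀ σ : Finset (Fin n), (if σ ∈ Δ then (1:ℝ) else 0)
      = ∑ T ∈ 𝓜.powerset, (-1 : ℝ) ^ T.card * (if T.sup id ⊆ σ then (1:ℝ) else 0) := by
    intro σ
    have hprod : (if σ ∈ Δ then (1:ℝ) else 0)
        = ∏ M ∈ 𝓜, ((-(if M ⊆ σ then (1:ℝ) else 0)) + 1) := by
      by_cases hσ : σ ∈ Δ
      · rw [if_pos hσ]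
        have hone : ∀ M ∈ 𝓜, (-(if M ⊆ σ then (1:ℝ) else 0)) + 1 = 1 := fun M hM => by
          rw [if_neg ((hmem σ).mp hσ M hM)]; ring
        rw [Finset.prod_congr rfl hone, Finset.prod_const_one]
      · rw [if_neg hσ]
        obtain ⟨M, hM, hMσ⟩ : ∃ M ∈ 𝓜, M ⊆ σ := by
          by_contra hc
          push_neg at hc
          exact hσ ((hmem σ).mpr hc)
        refine (Finset.prod_eq_zero hM ?_).symm
        rw [if_pos hMσ]; ring
    rw [hprod, Finset.prod_add]
    refine Finset.sum_congr rfl (fun T hT => ?_)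
    simp only [Finset.prod_const, one_pow, mul_one]
    have hneg : (∏ i ∈ T, -(if i ⊆ σ then (1:ℝ) else 0))
        = (-1:ℝ)^T.card * ∏ i ∈ T, (if i ⊆ σ then (1:ℝ) else 0) := by
      rw [← Finset.prod_const (-1:ℝ), ← Finset.prod_mul_distrib]
      exact Finset.prod_congr rfl (fun i _ => by ring)
    rw [hneg, Finset.prod_boole]
    have hsup : (T.sup id ⊆ σ) ↔ ∀ i ∈ T, i ⊆ σ := by
      rw [← Finset.le_iff_subset]
      exact Finset.sup_le_iff
    congr 1
    by_cases h : T.sup id ⊆ σ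
    · rw [if_pos h, if_pos (fun i hi => hsup.mp h i hi)]
    · rw [if_neg h, if_neg (fun hh => h (hsup.mpr hh))]
  rw [step1]
  rw [Finset.sum_congr rfl (fun σ _ => by rw [ind σ, Finset.sum_mul])]
  rw [Finset.sum_comm]
  refine Finset.sum_congr rfl (fun T hT => ?_)
  have : ∑ σ ∈ (univ : Finset (Fin n)).powerset,
      (-1:ℝ) ^ T.card * (if T.sup id ⊆ σ then (1:ℝ) else 0) * wt σ
      = (-1:ℝ) ^ T.card * ∑ σ ∈ (univ : Finset (Fin n)).powerset.filter
          (fun σ => T.sup id ⊆ σ), wt σ := by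
    rw [Finset.mul_sum, Finset.sum_filter]
    refine Finset.sum_congr rfl (fun σ _ => ?_)
    split <;> ring
  rw [this, sum_supset]
end

section
/- For a down-set Δ ⊆ 2^[n] with blockers 𝓜, let f_Δ(t) = ∑_{σ ∈ Δ} t^{|σ|}; then f_Δ(−1) = (−1)^n · ∑_{T ⊆ 𝓜, ⋃T = [n]} (−1)^{|T|}. -/
open Finset

theorem stmt_5 (n : ℕ) (Δ : Finset (Finset (Fin n)))
    (hΔ : ∀ σ ∈ Δ, ∀ τ ⊆ σ, τ ∈ Δ)
    (𝓜 : Finset (Finset (Fin n)))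
    (h𝓜 : ∀ M, M ∈ 𝓜 ↔ M ∉ Δ ∧ ∀ τ ⊂ M, τ ∈ Δ) :
    ∑ σ ∈ Δ, (-1 : ℤ) ^ σ.card =
      (-1 : ℤ) ^ n *
        ∑ T ∈ 𝓜.powerset.filter (fun T => T.sup id = Finset.univ),
          (-1 : ℤ) ^ T.card := by
  classical
  -- characterization: σ ∈ Δ ↔ no M ∈ 𝓜 with M ⊆ σ
  have hchar : ∀ σ : Finset (Fin n), σ ∈ Δ ↔ ∀ M ∈ 𝓜, ¬ M ⊆ σ := by
    intro σ
    constructor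
    · intro hσ M hM hMσ
      exact ((h𝓜 M).1 hM).1 (hΔ σ hσ M hMσ)
    · intro h
      by_contra hσ
      -- pick a minimal-cardinality non-face inside σ
      obtain ⟨τ, hτmem, hτmin⟩ :=
        Finset.exists_min_image (σ.powerset.filter (fun τ => τ ∉ Δ)) Finset.card
          ⟨σ, by simp [hσ]⟩
      simp only [mem_filter, mem_powerset] at hτmem
      refine h τ ((h𝓜 τ).2 ⟨hτmem.2, ?_⟩) hτmem.1
      intro ρ hρ
      by_contra hρΔ
      have := hτmin ρ (by simp [mem_filter, mem_powerset, hρΔ,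
        hρ.subset.trans hτmem.1])
      exact absurd (Finset.card_lt_card hρ) (not_lt.2 this)
  -- indicator identity
  have hind : ∀ σ : Finset (Fin n), (if σ ∈ Δ then (1 : ℤ) else 0) =
      ∑ T ∈ 𝓜.powerset.filter (fun T => T.sup id ⊆ σ), (-1 : ℤ) ^ T.card := by
    intro σ
    have hset : 𝓜.powerset.filter (fun T => T.sup id ⊆ σ)
        = (𝓜.filter (fun M => M ⊆ σ)).powerset := by
      ext T
      simp only [mem_filter, mem_powerset]
      constructor
      · rintro ⟨hT, hsup⟩ M hM
        exact mem_filter.2 ⟨hT hM, (Finset.le_sup (f := id) hM).trans hsup⟩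
      · intro h
        refine ⟨fun M hM => (mem_filter.1 (h hM)).1, Finset.sup_le fun M hM => ?_⟩
        exact (mem_filter.1 (h hM)).2
    rw [hset, sum_powerset_neg_one_pow_card]
    by_cases hσ : σ ∈ Δ
    · rw [if_pos hσ, if_pos]
      rw [Finset.filter_eq_empty_iff]
      exact fun {M} hM => (hchar σ).1 hσ M hM
    · rw [if_neg hσ, if_neg]
      rw [Finset.filter_eq_empty_iff]
      intro h
      exact hσ ((hchar σ).2 fun M hM => h hM)
  -- sum over supersets of U
  have hsup : ∀ U : Finset (Fin n),
      ∑ σ ∈ Finset.univ.filter (fun σ => U ⊆ σ), (-1 : ℤ) ^ σ.card =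
        if U = Finset.univ then (-1 : ℤ) ^ n else 0 := by
    intro U
    have : ∑ σ ∈ Finset.univ.filter (fun σ => U ⊆ σ), (-1 : ℤ) ^ σ.card
        = ∑ ρ ∈ Uᶜ.powerset, (-1 : ℤ) ^ (U.card + ρ.card) := by
      refine Finset.sum_nbij' (fun σ => σ \ U) (fun ρ => U ∪ ρ) ?_ ?_ ?_ ?_ ?_
      · intro σ hσ
        simp only [mem_filter, mem_univ, true_and] at hσ
        simp only [Finset.mem_powerset, Finset.subset_iff, Finset.mem_sdiff,
          Finset.mem_compl]
        tauto
      · intro ρ hρ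
        simp [mem_filter]
      · intro σ hσ
        simp only [mem_filter, mem_univ, true_and] at hσ
        exact Finset.union_sdiff_of_subset hσ
      · intro ρ hρ
        simp only [Finset.mem_powerset] at hρ
        refine Finset.union_sdiff_cancel_left ?_
        exact Finset.disjoint_left.2 fun x hxU hxρ => (Finset.mem_compl.1 (hρ hxρ)) hxU
      · intro σ hσ
        simp only [mem_filter, mem_univ, true_and] at hσ
        rw [← Finset.card_sdiff_add_card_eq_card hσ, Nat.add_comm]
    rw [this]
    simp_rw [pow_add]
    rw [← Finset.mul_sum, sum_powerset_neg_one_pow_card]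
    by_cases hU : U = Finset.univ
    · rw [if_pos hU, if_pos (by simp [hU])]
      subst hU
      simp [Finset.card_univ]
    · rw [if_neg hU, if_neg, mul_zero]
      simp [Finset.compl_eq_empty_iff, hU]
  -- assemble
  calc ∑ σ ∈ Δ, (-1 : ℤ) ^ σ.card
      = ∑ σ : Finset (Fin n), (if σ ∈ Δ then (1 : ℤ) else 0) * (-1) ^ σ.card := by
        symm
        simp_rw [ite_mul, one_mul, zero_mul]
        rw [Finset.sum_ite_mem, Finset.univ_inter]
    _ = ∑ σ : Finset (Fin n), ∑ T ∈ 𝓜.powerset.filter (fun T => T.sup id ⊆ σ),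
          (-1 : ℤ) ^ T.card * (-1) ^ σ.card := by
        refine Finset.sum_congr rfl fun σ _ => ?_
        rw [← Finset.sum_mul, ← hind σ]
    _ = ∑ σ : Finset (Fin n), ∑ T ∈ 𝓜.powerset,
          (if T.sup id ⊆ σ then (-1 : ℤ) ^ T.card * (-1) ^ σ.card else 0) := by
        refine Finset.sum_congr rfl fun σ _ => ?_
        rw [Finset.sum_filter]
    _ = ∑ T ∈ 𝓜.powerset, ∑ σ : Finset (Fin n),
          (if T.sup id ⊆ σ then (-1 : ℤ) ^ T.card * (-1) ^ σ.card else 0) := by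
        rw [Finset.sum_comm]
    _ = ∑ T ∈ 𝓜.powerset, (-1 : ℤ) ^ T.card *
          (if T.sup id = Finset.univ then (-1 : ℤ) ^ n else 0) := by
        refine Finset.sum_congr rfl fun T _ => ?_
        rw [← hsup (T.sup id), Finset.sum_filter, Finset.mul_sum]
        refine Finset.sum_congr rfl fun σ _ => ?_
        split <;> simp
    _ = (-1 : ℤ) ^ n * ∑ T ∈ 𝓜.powerset.filter (fun T => T.sup id = Finset.univ),
          (-1 : ℤ) ^ T.card := by
        rw [Finset.mul_sum, Finset.sum_filter]
        refine Finset.sum_congr rfl fun T _ => ?_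
        split <;> ring
end

section
/- For a down-set Δ ⊆ 2^[n] with maximal elements 𝓕, the f-polynomial f_Δ(t) = ∑_{σ ∈ Δ} t^{|σ|} satisfies f_Δ(t) = ∑_{∅ ≠ S ⊆ 𝓕} (−1)^{|S|+1} (t+1)^{|⋂S|}, as an identity of polynomials in t. -/
/-!
A down-set is the union of the power sets of its maximal elements, and an intersection of
power sets is the power set of the intersection. Inclusion–exclusion over this union, together
with `∑_{σ ⊆ A} t ^ |σ| = (t + 1) ^ |A|`, gives the formula.
-/

open Finset

theorem Finset.sum_powerset_pow_card {ι R : Type*} [CommSemiring R] (s : Finset ι) (x : R) :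
    ∑ t ∈ s.powerset, x ^ #t = (x + 1) ^ #s := by
  simpa using sum_pow_mul_eq_add_pow x 1 s

theorem Finset.powerset_inf' {α : Type*} [DecidableEq α] {s : Finset (Finset α)}
    (hs : s.Nonempty) : (s.inf' hs id).powerset = s.inf' hs powerset :=
  apply_inf'_eq_inf'_comp hs powerset fun _ _ ↦ by
    ext; simp only [inf_eq_inter, mem_inter, mem_powerset, subset_inter_iff]

theorem Finset.biUnion_powerset_of_maximal {α : Type*} [DecidableEq α] {Δ 𝓕 : Finset (Finset α)}
    (hΔ : ∀ σ ∈ Δ, ∀ τ ⊆ σ, τ ∈ Δ) (h𝓕 : ∀ F, F ∈ 𝓕 ↔ F ∈ Δ ∧ ∀ G ∈ Δ, F ⊆ G → F = G) :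
    𝓕.biUnion powerset = Δ := by
  ext σ
  simp only [mem_biUnion, mem_powerset, h𝓕]
  constructor
  · rintro ⟨F, ⟨hF, -⟩, hσF⟩
    exact hΔ F hF σ hσF
  · intro hσ
    obtain ⟨F, hσF, hF⟩ := Δ.exists_le_maximal hσ
    exact ⟨F, ⟨hF.prop, fun G hG hFG ↦ le_antisymm hFG (hF.2 hG hFG)⟩, hσF⟩

theorem stmt_7 (n : ℕ) (Δ : Finset (Finset (Fin n)))
    (hΔ : ∀ σ ∈ Δ, ∀ τ ⊆ σ, τ ∈ Δ)
    (𝓕 : Finset (Finset (Fin n)))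
    (h𝓕 : ∀ F, F ∈ 𝓕 ↔ F ∈ Δ ∧ ∀ G ∈ Δ, F ⊆ G → F = G)
    (t : ℝ) :
    ∑ σ ∈ Δ, t ^ σ.card =
      ∑ S ∈ 𝓕.powerset.filter (fun S => S ≠ ∅),
        (-1 : ℝ) ^ (S.card + 1) * (t + 1) ^ (S.inf id).card := by
  rw [← biUnion_powerset_of_maximal hΔ h𝓕, inclusion_exclusion_sum_biUnion]
  simp_rw [← nonempty_iff_ne_empty]
  rw [← sum_coe_sort (𝓕.powerset.filter (·.Nonempty))]
  refine Fintype.sum_congr _ _ fun S ↦ ?_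
  rw [← powerset_inf', sum_powerset_pow_card, inf'_eq_inf, zsmul_eq_mul, Int.cast_pow, Int.cast_neg,
    Int.cast_one]
end

section
/- For a down-set Δ ⊆ 2^[n] with ∅ ∈ Δ and Δ ≠ 2^[n], letting 𝓜 be the blockers of Δ and 𝓜* the blockers of the Alexander dual Δ*, one has ∑_{M* ∈ 𝓜*} 2^{−|M*|} + ∑_{M ∈ 𝓜} 2^{−|M|} ≥ 1. -/
/-!
Every non-member of a family `Γ ⊆ 2^[n]` lies above one of its blockers, and the sets above `M`
make up a fraction `2^{-|M|}` of `2^[n]`; so the blocker sum of any family bounds the proportion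
of its non-members. The non-faces of `Δ*` are the complements of the faces of `Δ`, hence the two
proportions add up to `1`.
-/

open Finset

/-- The Alexander dual of a family of subsets of `Fin n`. -/
def alexDual {n : ℕ} (Δ : Finset (Finset (Fin n))) : Finset (Finset (Fin n)) :=
  (Finset.univ.filter (fun σ => σ ∉ Δ)).image (fun σ => σᶜ)

theorem exists_mem_blockers_subset {α : Type*} {Γ 𝓜 : Finset (Finset α)}
    (h𝓜 : ∀ M, M ∈ 𝓜 ↔ M ∉ Γ ∧ ∀ τ ⊂ M, τ ∈ Γ) {σ : Finset α} (hσ : σ ∉ Γ) : ∃ M ∈ 𝓜, M ⊆ σ := by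
  obtain ⟨M, hMσ, hmin⟩ := exists_minimal_le_of_wellFoundedLT (· ∉ Γ) σ hσ
  exact ⟨M, (h𝓜 M).2 ⟨hmin.prop, fun τ hτ => not_not.1 (hmin.not_prop_of_lt hτ)⟩, hMσ⟩

section Blockers

variable {α : Type*} [Fintype α] [DecidableEq α]

theorem card_Ici_finset (s : Finset α) : #(Ici s) = 2 ^ (Fintype.card α - #s) := by
  rw [show Ici s = Icc s univ from rfl, card_Icc_finset (subset_univ s), card_univ]

variable {Γ 𝓜 : Finset (Finset α)}

theorem compl_subset_biUnion_Ici (h𝓜 : ∀ M, M ∈ 𝓜 ↔ M ∉ Γ ∧ ∀ τ ⊂ M, τ ∈ Γ) :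
    Γᶜ ⊆ 𝓜.biUnion Ici := by
  intro σ hσ
  obtain ⟨M, hM, hMσ⟩ := exists_mem_blockers_subset h𝓜 (mem_compl.1 hσ)
  exact mem_biUnion.2 ⟨M, hM, mem_Ici.2 hMσ⟩

theorem card_compl_div_le_sum_blockers (h𝓜 : ∀ M, M ∈ 𝓜 ↔ M ∉ Γ ∧ ∀ τ ⊂ M, τ ∈ Γ) :
    (#Γᶜ : ℝ) / 2 ^ Fintype.card α ≤ ∑ M ∈ 𝓜, (1 / 2 : ℝ) ^ #M := by
  have hcover : #Γᶜ ≤ ∑ M ∈ 𝓜, #(Ici M) :=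
    (card_le_card (compl_subset_biUnion_Ici h𝓜)).trans card_biUnion_le
  calc (#Γᶜ : ℝ) / 2 ^ Fintype.card α
      ≤ (∑ M ∈ 𝓜, (#(Ici M) : ℝ)) / 2 ^ Fintype.card α := by gcongr; exact_mod_cast hcover
    _ = ∑ M ∈ 𝓜, (1 / 2 : ℝ) ^ #M := by
      rw [sum_div]
      refine sum_congr rfl fun M _ => ?_
      rw [card_Ici_finset, Nat.cast_pow, Nat.cast_ofNat,
        pow_sub₀ _ two_ne_zero (card_le_univ M), one_div, inv_pow]
      field_simp

end Blockers

theorem mem_alexDual {n : ℕ} {Δ : Finset (Finset (Fin n))} {σ : Finset (Fin n)} :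
    σ ∈ alexDual Δ ↔ σᶜ ∉ Δ := by
  simp [alexDual]

theorem card_compl_alexDual {n : ℕ} (Δ : Finset (Finset (Fin n))) : #(alexDual Δ)ᶜ = #Δ := by
  have : (alexDual Δ)ᶜ = Δ.image compl := by
    ext σ
    simp [mem_alexDual]
  rw [this, card_image_of_injective _ compl_injective]

theorem stmt_13_general (n : ℕ) (Δ : Finset (Finset (Fin n)))
    (𝓜 : Finset (Finset (Fin n)))
    (h𝓜 : ∀ M, M ∈ 𝓜 ↔ M ∉ Δ ∧ ∀ τ ⊂ M, τ ∈ Δ)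
    (𝓜' : Finset (Finset (Fin n)))
    (h𝓜' : ∀ M, M ∈ 𝓜' ↔ M ∉ alexDual Δ ∧ ∀ τ ⊂ M, τ ∈ alexDual Δ) :
    (1 : ℝ) ≤ (∑ M ∈ 𝓜', (1 / 2 : ℝ) ^ M.card) +
      ∑ M ∈ 𝓜, (1 / 2 : ℝ) ^ M.card := by
  have hsplit : (#Δ : ℝ) + #Δᶜ = 2 ^ Fintype.card (Fin n) := by
    exact_mod_cast (card_add_card_compl Δ).trans Fintype.card_finset
  calc (1 : ℝ)
      = (#(alexDual Δ)ᶜ : ℝ) / 2 ^ Fintype.card (Fin n) + #Δᶜ / 2 ^ Fintype.card (Fin n) := by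
        rw [card_compl_alexDual, ← add_div, hsplit, div_self (by positivity)]
    _ ≤ _ := add_le_add (card_compl_div_le_sum_blockers h𝓜') (card_compl_div_le_sum_blockers h𝓜)

theorem stmt_13 (n : ℕ) (Δ : Finset (Finset (Fin n)))
    (hΔ : ∀ σ ∈ Δ, ∀ τ ⊆ σ, τ ∈ Δ)
    (h0 : ∅ ∈ Δ) (hne : Δ ≠ Finset.univ)
    (𝓜 : Finset (Finset (Fin n)))
    (h𝓜 : ∀ M, M ∈ 𝓜 ↔ M ∉ Δ ∧ ∀ τ ⊂ M, τ ∈ Δ)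
    (𝓜' : Finset (Finset (Fin n)))
    (h𝓜' : ∀ M, M ∈ 𝓜' ↔ M ∉ alexDual Δ ∧ ∀ τ ⊂ M, τ ∈ alexDual Δ) :
    (1 : ℝ) ≤ (∑ M ∈ 𝓜', (1 / 2 : ℝ) ^ M.card) +
      ∑ M ∈ 𝓜, (1 / 2 : ℝ) ^ M.card :=
  stmt_13_general n Δ 𝓜 h𝓜 𝓜' h𝓜'
end

section
/- For a down-set Δ ⊆ 2^[n] with maximal elements 𝓕, the alternating sum identity ∑_{σ ∈ Δ} (−1)^{|σ|} = ∑_{∅ ≠ S ⊆ 𝓕} (−1)^{|S|+1} · 0^{|⋂S|} holds, where 0^0 = 1 and 0^k = 0 for k > 0; equivalently ∑_{σ ∈ Δ} (−1)^{|σ|} = −∑_{∅ ≠ S ⊆ 𝓕, ⋂S = ∅} (−1)^{|S|}. -/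
/-!
Every face of a down-set lies in a maximal face, so `Δ` is the union of the simplices `2^F`,
`F ∈ 𝓕`. Inclusion–exclusion over this cover expresses `∑_{σ ∈ Δ} (-1)^|σ|` through the
intersections `⋂_{F ∈ S} 2^F = 2^(⋂ S)`, and the alternating sum over the full simplex `2^T`
vanishes unless `T = ∅`, i.e. equals `0^|T|`.
-/

open Finset

namespace Finset

variable {α : Type*} [DecidableEq α]

theorem eq_biUnion_powerset_of_isLowerSet {Δ 𝓕 : Finset (Finset α)}
    (hΔ : IsLowerSet (Δ : Set (Finset α))) (h𝓕 : ∀ F, F ∈ 𝓕 ↔ Maximal (· ∈ Δ) F) :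
    Δ = 𝓕.biUnion powerset := by
  ext σ
  simp only [mem_biUnion, mem_powerset]
  constructor
  · intro hσ
    obtain ⟨F, hσF, hF⟩ := Δ.exists_le_maximal hσ
    exact ⟨F, (h𝓕 F).2 hF, hσF⟩
  · rintro ⟨F, hF, hσF⟩
    exact hΔ hσF ((h𝓕 F).1 hF).1

theorem inf'_powerset [Fintype α] (s : Finset (Finset α)) (hs : s.Nonempty) :
    s.inf' hs powerset = (s.inf id).powerset := by
  ext σ
  simp only [mem_inf', mem_powerset, Finset.le_inf_iff, id]

theorem sum_powerset_neg_one_pow_card_eq_zero_pow (x : Finset α) :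
    ∑ m ∈ x.powerset, (-1 : ℤ) ^ #m = 0 ^ #x := by
  simp only [sum_powerset_neg_one_pow_card, zero_pow_eq, card_eq_zero]

end Finset

theorem stmt_19 (n : ℕ) (Δ : Finset (Finset (Fin n)))
    (hΔ : ∀ σ ∈ Δ, ∀ τ ⊆ σ, τ ∈ Δ)
    (𝓕 : Finset (Finset (Fin n)))
    (h𝓕 : ∀ F, F ∈ 𝓕 ↔ F ∈ Δ ∧ ∀ G ∈ Δ, F ⊆ G → F = G) :
    ∑ σ ∈ Δ, (-1 : ℤ) ^ σ.card =
      ∑ S ∈ 𝓕.powerset.filter (fun S => S ≠ ∅),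
        (-1 : ℤ) ^ (S.card + 1) * (0 : ℤ) ^ (S.inf id).card := by
  have hlower : IsLowerSet (Δ : Set (Finset (Fin n))) := fun σ τ hτσ hσ => hΔ σ hσ τ hτσ
  have hmax : ∀ F, F ∈ 𝓕 ↔ Maximal (· ∈ Δ) F := fun F => by
    rw [h𝓕, maximal_iff]
  rw [eq_biUnion_powerset_of_isLowerSet hlower hmax, inclusion_exclusion_sum_biUnion]
  simp only [inf'_powerset, sum_powerset_neg_one_pow_card_eq_zero_pow, smul_eq_mul]
  rw [sum_coe_sort (𝓕.powerset.filter (·.Nonempty))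
    (fun S => (-1 : ℤ) ^ (#S + 1) * 0 ^ #(S.inf id))]
  simp only [nonempty_iff_ne_empty]
end
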